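/- With the notation below, if b_0+b_2 ≢ b_1+b_3 (mod 2), then D_4(b)·D_4(c) ≡ 1 − 4(b_0b_2 + b_1b_3 + c_0c_2 + c_1c_3) (mod 16). -/

import Mathlib

open Matrix Complex

def D4 (x0 x1 x2 x3 : ℤ) : ℤ :=
  (Matrix.of ![![x0, x1, x2, x3], ![x3, x0, x1, x2], ![x2, x3, x0, x1], ![x1, x2, x3, x0]]).det

def bI (a : ℕ → ℤ) (i : ℕ) : ℤ := (a i + a (i + 8)) + (a (i + 4) + a (i + 12))

def cI (a : ℕ → ℤ) (i : ℕ) : ℤ := (a i + a (i + 8)) - (a (i + 4) + a (i + 12))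

/-! The circulant determinant factors as `D4 x = (s² - t²)(u² + v²)` with `s = x₀ + x₂`,
`t = x₁ + x₃`, `u = x₀ - x₂`, `v = x₁ - x₃`, while `4(x₀x₂ + x₁x₃) = s² + t² - u² - v²`.
When `s` is odd and `t` even, odd squares are `1 mod 8` and even squares `0 mod 4`, and expanding
gives `D4 x ≡ 1 - 4(x₀x₂ + x₁x₃) (mod 16)`. Rotating `x` swaps the roles of `s` and `t` and only
changes the sign of `D4`, so when `s` is even the same congruence holds up to sign. Both signs
agree for `b` and `c`, which have the same parities, and the product of the two congruences
is the claim because the cross term is divisible by `16`. -/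

theorem D4_eq (x0 x1 x2 x3 : ℤ) :
    D4 x0 x1 x2 x3 = ((x0 + x2) ^ 2 - (x1 + x3) ^ 2) * ((x0 - x2) ^ 2 + (x1 - x3) ^ 2) := by
  simp [D4, Matrix.det_succ_row_zero, Fin.sum_univ_succ, Fin.succAbove]
  ring

theorem D4_rotate (x0 x1 x2 x3 : ℤ) : D4 x1 x2 x3 x0 = -D4 x0 x1 x2 x3 := by
  rw [D4_eq, D4_eq]
  ring

theorem sq_sub_sq_mul_sq_add_sq_modEq_sixteen {s t u v : ℤ} (hs : Odd s) (ht : Even t)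
    (hu : Odd u) (hv : Even v) :
    (s ^ 2 - t ^ 2) * (u ^ 2 + v ^ 2) ≡ 1 - (s ^ 2 + t ^ 2 - u ^ 2 - v ^ 2) [ZMOD 16] := by
  obtain ⟨α, hα⟩ := Int.eight_dvd_sq_sub_one_of_odd hs
  obtain ⟨β, hβ⟩ := Int.eight_dvd_sq_sub_one_of_odd hu
  obtain ⟨p, rfl⟩ := ht
  obtain ⟨q, rfl⟩ := hv
  rw [show s ^ 2 = 8 * α + 1 by linarith, show u ^ 2 = 8 * β + 1 by linarith]
  exact Int.modEq_iff_dvd.mpr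
    ⟨-(α + 4 * α * β + 2 * α * q ^ 2 - 2 * β * p ^ 2 - p ^ 2 * q ^ 2), by ring⟩

theorem D4_modEq_of_odd_of_even {x0 x1 x2 x3 : ℤ} (hs : Odd (x0 + x2)) (ht : Even (x1 + x3)) :
    D4 x0 x1 x2 x3 ≡ 1 - 4 * (x0 * x2 + x1 * x3) [ZMOD 16] := by
  have hu : Odd (x0 - x2) := by
    rw [show x0 - x2 = x0 + x2 - 2 * x2 by ring]
    exact hs.sub_even (even_two_mul x2)
  have hv : Even (x1 - x3) := by
    rw [show x1 - x3 = x1 + x3 - 2 * x3 by ring]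
    exact ht.sub (even_two_mul x3)
  rw [D4_eq]
  convert sq_sub_sq_mul_sq_add_sq_modEq_sixteen hs ht hu hv using 2
  ring

theorem D4_mul_D4_modEq_of_odd_of_even {x0 x1 x2 x3 y0 y1 y2 y3 : ℤ}
    (hx02 : Odd (x0 + x2)) (hx13 : Even (x1 + x3)) (hy02 : Odd (y0 + y2)) (hy13 : Even (y1 + y3)) :
    D4 x0 x1 x2 x3 * D4 y0 y1 y2 y3 ≡
      1 - 4 * (x0 * x2 + x1 * x3 + y0 * y2 + y1 * y3) [ZMOD 16] :=
  ((D4_modEq_of_odd_of_even hx02 hx13).mul (D4_modEq_of_odd_of_even hy02 hy13)).trans <|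
    Int.modEq_iff_dvd.mpr ⟨-((x0 * x2 + x1 * x3) * (y0 * y2 + y1 * y3)), by ring⟩

theorem D4_mul_D4_modEq {x0 x1 x2 x3 y0 y1 y2 y3 : ℤ} (hx : ¬ (x0 + x2 ≡ x1 + x3 [ZMOD 2]))
    (h02 : x0 + x2 ≡ y0 + y2 [ZMOD 2]) (h13 : x1 + x3 ≡ y1 + y3 [ZMOD 2]) :
    D4 x0 x1 x2 x3 * D4 y0 y1 y2 y3 ≡
      1 - 4 * (x0 * x2 + x1 * x3 + y0 * y2 + y1 * y3) [ZMOD 16] := by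
  simp only [Int.ModEq] at hx h02 h13
  rcases Int.emod_two_eq_zero_or_one (x0 + x2) with h | h
  · have hrot := D4_mul_D4_modEq_of_odd_of_even (x0 := x1) (x1 := x2) (x2 := x3) (x3 := x0)
      (y0 := y1) (y1 := y2) (y2 := y3) (y3 := y0)
      (by rw [Int.odd_iff]; omega) (by rw [Int.even_iff]; omega)
      (by rw [Int.odd_iff]; omega) (by rw [Int.even_iff]; omega)
    rw [D4_rotate x0, D4_rotate y0, neg_mul_neg] at hrot
    convert hrot using 3
    ring
  · exact D4_mul_D4_modEq_of_odd_of_even (by rw [Int.odd_iff]; omega) (by rw [Int.even_iff]; omega)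
      (by rw [Int.odd_iff]; omega) (by rw [Int.even_iff]; omega)

theorem bI_modEq_cI (a : ℕ → ℤ) (i : ℕ) : bI a i ≡ cI a i [ZMOD 2] :=
  Int.modEq_iff_dvd.mpr ⟨-(a (i + 4) + a (i + 12)), by simp only [bI, cI]; ring⟩

theorem stmt10 (a : ℕ → ℤ)
    (h : ¬ (bI a 0 + bI a 2 ≡ bI a 1 + bI a 3 [ZMOD 2])) :
    D4 (bI a 0) (bI a 1) (bI a 2) (bI a 3) * D4 (cI a 0) (cI a 1) (cI a 2) (cI a 3) ≡
      1 - 4 * (bI a 0 * bI a 2 + bI a 1 * bI a 3 + cI a 0 * cI a 2 + cI a 1 * cI a 3) [ZMOD 16] :=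
  D4_mul_D4_modEq h ((bI_modEq_cI a 0).add (bI_modEq_cI a 2))
    ((bI_modEq_cI a 1).add (bI_modEq_cI a 3))
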